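/- arXiv:1512.08035 — 9 statements merged into one kernel-verified Lean document; each statement's English description precedes it below -/
import Mathlib

section
/- If Γ is a satisfiable set of s-formulas, then Γ ⊨ₛ A ⇒ B if and only if Γ⁺ ⊨ₛ A ⇒ B, and this holds if and only if Γ⁺_prop ⊨ A → B in classical propositional logic. -/
/-- Propositional formulas over variables `V`. -/
inductive PropForm (V : Type) : Type
  | var : V → PropForm V
  | not : PropForm V → PropForm V
  | and : PropForm V → PropForm V → PropForm V
  | or  : PropForm V → PropForm V → PropForm V
  | imp : PropForm V → PropForm V → PropForm V

namespace PropForm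
def eval {V : Type} (v : V → Bool) : PropForm V → Bool
  | var x => v x
  | not A => !(A.eval v)
  | and A B => A.eval v && B.eval v
  | or A B => A.eval v || B.eval v
  | imp A B => !(A.eval v) || B.eval v
end PropForm

/-- s-formulas: positive `A ⇒ B` or negative `A ⇏ B`. -/
inductive SForm (V : Type) : Type
  | pos : PropForm V → PropForm V → SForm V
  | neg : PropForm V → PropForm V → SForm V

def SForm.IsPos {V : Type} : SForm V → Prop
  | .pos _ _ => True
  | .neg _ _ => False

/-- A frame (set of valuations, nonemptiness required separately) satisfies an s-formula. -/
def FrameSat {V : Type} (W : Set (V → Bool)) : SForm V → Prop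
  | .pos A B => ∀ v ∈ W, A.eval v = true → B.eval v = true
  | .neg A B => ∃ v ∈ W, A.eval v = true ∧ B.eval v = false

/-- Satisfiability of a set of s-formulas by some (nonempty) frame. -/
def SSat {V : Type} (Γ : Set (SForm V)) : Prop :=
  ∃ W : Set (V → Bool), W.Nonempty ∧ ∀ φ ∈ Γ, FrameSat W φ

/-- s-logical consequence `Γ ⊨ₛ α`. -/
def SCons {V : Type} (Γ : Set (SForm V)) (α : SForm V) : Prop :=
  ∀ W : Set (V → Bool), W.Nonempty → (∀ φ ∈ Γ, FrameSat W φ) → FrameSat W α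

/-- `Γ⁺`: the positive s-formulas of `Γ`. -/
def posPart {V : Type} (Γ : Set (SForm V)) : Set (SForm V) :=
  {φ | φ ∈ Γ ∧ ∃ A B, φ = SForm.pos A B}

/-- `Γ⁺_prop`: propositional implications corresponding to the positive s-formulas of `Γ`. -/
def propPart {V : Type} (Γ : Set (SForm V)) : Set (PropForm V) :=
  {C | ∃ A B, SForm.pos A B ∈ Γ ∧ C = PropForm.imp A B}

/-- Classical propositional satisfiability of a set of formulas. -/
def PropSat {V : Type} (S : Set (PropForm V)) : Prop :=
  ∃ v : V → Bool, ∀ C ∈ S, C.eval v = true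

/-- Classical propositional consequence. -/
def PropCons {V : Type} (S : Set (PropForm V)) (C : PropForm V) : Prop :=
  ∀ v : V → Bool, (∀ D ∈ S, D.eval v = true) → C.eval v = true

/-- Conjunction of a nonempty list of variables. -/
def varConj {V : Type} (x : V) (l : List V) : PropForm V :=
  l.foldl (fun acc y => acc.and (.var y)) (.var x)

/-- Disjunction of a nonempty list of variables. -/
def varDisj {V : Type} (x : V) (l : List V) : PropForm V :=
  l.foldl (fun acc y => acc.or (.var y)) (.var x)

theorem stmt4 {V : Type} (Γ : Set (SForm V)) (hΓ : SSat Γ) (A B : PropForm V) :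
    (SCons Γ (SForm.pos A B) ↔ SCons (posPart Γ) (SForm.pos A B)) ∧
    (SCons Γ (SForm.pos A B) ↔ PropCons (propPart Γ) (PropForm.imp A B)) := by
  obtain ⟨W0, hW0ne, hW0⟩ := hΓ
  -- SCons Γ → PropCons
  have h1 : SCons Γ (SForm.pos A B) → PropCons (propPart Γ) (PropForm.imp A B) := by
    intro h v hv
    have hW : ∀ φ ∈ Γ, FrameSat (insert v W0) φ := by
      intro φ hφ
      cases φ with
      | pos C D =>
          intro w hw hC
          rcases hw with rfl | hw
          · have := hv (PropForm.imp C D) ⟨C, D, hφ, rfl⟩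
            simp [PropForm.eval, hC] at this
            exact this
          · exact hW0 _ hφ w hw hC
      | neg C D =>
          obtain ⟨w, hw, h1, h2⟩ := hW0 _ hφ
          exact ⟨w, Set.mem_insert_of_mem _ hw, h1, h2⟩
    have := h (insert v W0) ⟨v, Set.mem_insert _ _⟩ hW v (Set.mem_insert _ _)
    simp only [PropForm.eval]
    cases hA : A.eval v with
    | false => simp
    | true => simp [this hA]
  -- PropCons → SCons posPart
  have h2 : PropCons (propPart Γ) (PropForm.imp A B) → SCons (posPart Γ) (SForm.pos A B) := by
    intro h W _ hW v hv hA
    have hv' : ∀ D ∈ propPart Γ, D.eval v = true := by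
      rintro D ⟨C, E, hCE, rfl⟩
      have := hW (SForm.pos C E) ⟨hCE, C, E, rfl⟩ v hv
      simp only [PropForm.eval]
      cases hC : C.eval v with
      | false => simp
      | true => simp [this hC]
    have := h v hv'
    simp [PropForm.eval, hA] at this
    exact this
  -- SCons posPart → SCons Γ
  have h3 : SCons (posPart Γ) (SForm.pos A B) → SCons Γ (SForm.pos A B) := by
    intro h W hne hW
    exact h W hne (fun φ hφ => hW φ hφ.1)
  exact ⟨⟨fun h => h2 (h1 h), h3⟩, ⟨h1, fun h => h3 (h2 h)⟩⟩
end

section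
/- Let A, B, C, D be distinct propositional variables. Then {A ⇏ D, B ⇏ D, A ⇒ C} ⊨ₛ C ⇏ D and {A ⇏ D, B ⇏ D, B ⇒ C} ⊨ₛ C ⇏ D, but {A ⇏ D, B ⇏ D, (A ∧ B) ⇒ C} ⊭ₛ C ⇏ D. Hence the cut-like rule 'from Γ, A→C ⊨ α and Γ, B→C ⊨ α conclude Γ, A∧B→C ⊨ α', valid in propositional logic, fails in s-logic. -/
theorem stmt6 {V : Type} (A B C D : V)
    (hAB : A ≠ B) (hAC : A ≠ C) (hAD : A ≠ D)
    (hBC : B ≠ C) (hBD : B ≠ D) (hCD : C ≠ D) :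
    SCons {SForm.neg (.var A) (.var D), SForm.neg (.var B) (.var D),
        SForm.pos (.var A) (.var C)} (SForm.neg (.var C) (.var D)) ∧
    SCons {SForm.neg (.var A) (.var D), SForm.neg (.var B) (.var D),
        SForm.pos (.var B) (.var C)} (SForm.neg (.var C) (.var D)) ∧
    ¬ SCons {SForm.neg (.var A) (.var D), SForm.neg (.var B) (.var D),
        SForm.pos ((PropForm.var A).and (.var B)) (.var C)}
        (SForm.neg (.var C) (.var D)) ∧
    ¬ (∀ (Γ : Set (SForm V)) (P Q R : PropForm V) (α : SForm V),
        SCons (insert (SForm.pos P R) Γ) α →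
        SCons (insert (SForm.pos Q R) Γ) α →
        SCons (insert (SForm.pos (P.and Q) R) Γ) α) := by
  classical
  have part1 : SCons {SForm.neg (.var A) (.var D), SForm.neg (.var B) (.var D),
      SForm.pos (.var A) (.var C)} (SForm.neg (.var C) (.var D)) := by
    intro W _ h
    obtain ⟨v, hv, hA, hD⟩ := h (SForm.neg (.var A) (.var D)) (by simp)
    exact ⟨v, hv, h (SForm.pos (.var A) (.var C)) (by simp) v hv hA, hD⟩
  have part2 : SCons {SForm.neg (.var A) (.var D), SForm.neg (.var B) (.var D),
      SForm.pos (.var B) (.var C)} (SForm.neg (.var C) (.var D)) := by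
    intro W _ h
    obtain ⟨v, hv, hB, hD⟩ := h (SForm.neg (.var B) (.var D)) (by simp)
    exact ⟨v, hv, h (SForm.pos (.var B) (.var C)) (by simp) v hv hB, hD⟩
  have part3 : ¬ SCons {SForm.neg (.var A) (.var D), SForm.neg (.var B) (.var D),
      SForm.pos ((PropForm.var A).and (.var B)) (.var C)}
      (SForm.neg (.var C) (.var D)) := by
    intro h
    set v1 : V → Bool := fun x => decide (x = A) with hv1
    set v2 : V → Bool := fun x => decide (x = B) with hv2
    have := h {v1, v2} ⟨v1, by simp⟩ ?_
    · obtain ⟨v, hv, hC, _⟩ := this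
      rcases hv with rfl | rfl
      · simp [PropForm.eval, hv1, hAC.symm] at hC
      · simp [PropForm.eval, hv2, hBC.symm] at hC
    · intro φ hφ
      simp only [Set.mem_insert_iff, Set.mem_singleton_iff] at hφ
      rcases hφ with rfl | rfl | rfl
      · exact ⟨v1, by simp, by simp [PropForm.eval, hv1, hAD.symm]⟩
      · exact ⟨v2, by simp, by simp [PropForm.eval, hv2, hBD.symm]⟩
      · intro v hv hAB'
        rcases hv with rfl | rfl
        · simp [PropForm.eval, hv1, hAB.symm] at hAB'
        · simp [PropForm.eval, hv2, hAB] at hAB'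
  refine ⟨part1, part2, part3, fun h => part3 ?_⟩
  have := h {SForm.neg (.var A) (.var D), SForm.neg (.var B) (.var D)}
      (.var A) (.var B) (.var C) (SForm.neg (.var C) (.var D)) ?_ ?_
  · have e : (insert (SForm.pos ((PropForm.var A).and (.var B)) (.var C))
        {SForm.neg (.var A) (.var D), SForm.neg (.var B) (.var D)} : Set (SForm V)) =
        {SForm.neg (.var A) (.var D), SForm.neg (.var B) (.var D),
          SForm.pos ((PropForm.var A).and (.var B)) (.var C)} := by
      ext φ; simp; tauto
    rwa [e] at this
  · have e : (insert (SForm.pos (PropForm.var A) (.var C))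
        {SForm.neg (.var A) (.var D), SForm.neg (.var B) (.var D)} : Set (SForm V)) =
        {SForm.neg (.var A) (.var D), SForm.neg (.var B) (.var D),
          SForm.pos (.var A) (.var C)} := by
      ext φ; simp; tauto
    rwa [e]
  · have e : (insert (SForm.pos (PropForm.var B) (.var C))
        {SForm.neg (.var A) (.var D), SForm.neg (.var B) (.var D)} : Set (SForm V)) =
        {SForm.neg (.var A) (.var D), SForm.neg (.var B) (.var D),
          SForm.pos (.var B) (.var C)} := by
      ext φ; simp; tauto
    rwa [e]
end

section
/- The rule (N) of the F₁ fragment is sound: if a frame W satisfies X ⇏ Y, X ⇒ W', and Z ⇒ Y (for propositional variables X, Y, Z, W'), then W satisfies W' ⇏ Z. -/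
theorem FrameSat.neg_of_pos_of_pos {V : Type} {W : Set (V → Bool)} {A B C D : PropForm V}
    (hAB : FrameSat W (.neg A B)) (hAC : FrameSat W (.pos A C)) (hDB : FrameSat W (.pos D B)) :
    FrameSat W (.neg C D) := by
  obtain ⟨v, hv, hA, hB⟩ := hAB
  refine ⟨v, hv, hAC v hv hA, Bool.eq_false_iff.2 fun hD => ?_⟩
  simp [hDB v hv hD] at hB

theorem stmt11_general {V : Type} (W : Set (V → Bool)) (X Y Z W' : V)
    (h1 : FrameSat W (SForm.neg (.var X) (.var Y)))
    (h2 : FrameSat W (SForm.pos (.var X) (.var W')))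
    (h3 : FrameSat W (SForm.pos (.var Z) (.var Y))) :
    FrameSat W (SForm.neg (.var W') (.var Z)) :=
  h1.neg_of_pos_of_pos h2 h3

theorem stmt11 {V : Type} (W : Set (V → Bool)) (hW : W.Nonempty) (X Y Z W' : V)
    (h1 : FrameSat W (SForm.neg (.var X) (.var Y)))
    (h2 : FrameSat W (SForm.pos (.var X) (.var W')))
    (h3 : FrameSat W (SForm.pos (.var Z) (.var Y))) :
    FrameSat W (SForm.neg (.var W') (.var Z)) :=
  stmt11_general W X Y Z W' h1 h2 h3
end

section
/- The rule (N) of the F₂ fragment is sound: if a frame satisfies A ⇏ X, (A ∧ Z) ⇒ X, and A ⇒ Yᵢ for each i = 1,…,n, then it satisfies (Y₁ ∧ … ∧ Yₙ) ⇏ Z, where A is a conjunction of propositional variables and X, Z, Y₁,…,Yₙ are propositional variables. -/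
/-
Take a valuation `v` of the frame witnessing `A ⇏ X`. It makes `A` true, so by `A ⇒ Yᵢ` it makes
every `Yᵢ` true, i.e. it makes `Y₁ ∧ … ∧ Yₙ` true. If it made `Z` true, then `A ∧ Z ⇒ X` would make
`X` true, which it does not; so `v` also witnesses `(Y₁ ∧ … ∧ Yₙ) ⇏ Z`.
-/

theorem PropForm.eval_foldl_and_var {V : Type} (v : V → Bool) (l : List V) (P : PropForm V) :
    (l.foldl (fun acc y => acc.and (.var y)) P).eval v = (P.eval v && l.all v) := by
  induction l generalizing P with
  | nil => simp
  | cons b bs ih => simp [ih, PropForm.eval, Bool.and_assoc]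

theorem eval_varConj_eq_true_iff {V : Type} (v : V → Bool) (x : V) (l : List V) :
    (varConj x l).eval v = true ↔ ∀ y ∈ x :: l, v y = true := by
  simp [varConj, PropForm.eval_foldl_and_var, PropForm.eval]

theorem stmt12_general {V : Type} (W : Set (V → Bool))
    (a : V) (as : List V) (X Z : V) (y : V) (ys : List V)
    (h1 : FrameSat W (SForm.neg (varConj a as) (.var X)))
    (h2 : FrameSat W (SForm.pos ((varConj a as).and (.var Z)) (.var X)))
    (h3 : ∀ Yi ∈ y :: ys, FrameSat W (SForm.pos (varConj a as) (.var Yi))) :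
    FrameSat W (SForm.neg (varConj y ys) (.var Z)) := by
  obtain ⟨v, hvW, hA, hX⟩ := h1
  have hY : (varConj y ys).eval v = true :=
    (eval_varConj_eq_true_iff v y ys).2 fun Yi hYi => h3 Yi hYi v hvW hA
  have hZ : v Z = false := by
    by_contra hZ
    have hX' : v X = true := h2 v hvW (by simp_all [PropForm.eval])
    simp_all [PropForm.eval]
  exact ⟨v, hvW, hY, hZ⟩

theorem stmt12 {V : Type} (W : Set (V → Bool)) (hW : W.Nonempty)
    (a : V) (as : List V) (X Z : V) (y : V) (ys : List V)
    (h1 : FrameSat W (SForm.neg (varConj a as) (.var X)))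
    (h2 : FrameSat W (SForm.pos ((varConj a as).and (.var Z)) (.var X)))
    (h3 : ∀ Yi ∈ y :: ys, FrameSat W (SForm.pos (varConj a as) (.var Yi))) :
    FrameSat W (SForm.neg (varConj y ys) (.var Z)) :=
  stmt12_general W a as X Z y ys h1 h2 h3
end

section
/- The negation rule (neg) is sound for s-logic: if Γ' ⊨ₛ C ⇏ Y and Γ ∪ {A ⇒ X} ⊨ₛ C ⇒ Y, then Γ ∪ Γ' ⊨ₛ A ⇏ X, for propositional formulas A, X, C, Y. -/
theorem stmt13 {V : Type} (Γ Γ' : Set (SForm V)) (A X C Y : PropForm V)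
    (h1 : SCons Γ' (SForm.neg C Y))
    (h2 : SCons (Γ ∪ {SForm.pos A X}) (SForm.pos C Y)) :
    SCons (Γ ∪ Γ') (SForm.neg A X) := by
  intro W hW hΓ
  obtain ⟨v, hv, hC, hY⟩ := h1 W hW (fun φ hφ => hΓ φ (Or.inr hφ))
  by_contra hcon
  have hpos : FrameSat W (SForm.pos C Y) := by
    apply h2 W hW
    intro φ hφ
    rcases hφ with hφ | hφ
    · exact hΓ φ (Or.inl hφ)
    · cases hφ
      intro w hw hA
      by_contra hX
      exact hcon ⟨w, hw, hA, by simpa using hX⟩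
  have := hpos v hv hC
  simp [hY] at this
end

section
/- The rule (disj2) is sound for positive premise sets: let Γ be a set of positive s-formulas, A a conjunction of propositional variables, B = B₁ ∨ … ∨ Bₙ a disjunction of propositional variables, and C, E as in F₃. If Γ ⊨ₛ A ⇒ B and Γ ∪ {A ⇒ Bᵢ} ⊨ₛ C ⇒ E for each i = 1,…,n, then Γ ⊨ₛ C ⇒ E. -/
lemma foldlOr_eval {V : Type} (v : V → Bool) (l : List V) (P : PropForm V) :
    (l.foldl (fun acc y => acc.or (.var y)) P).eval v
      = (P.eval v || l.any (fun y => v y)) := by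
  induction l generalizing P with
  | nil => simp
  | cons y t ih =>
      simp [List.foldl, ih, PropForm.eval, Bool.or_assoc]

lemma varDisj_exists {V : Type} (v : V → Bool) (x : V) (l : List V)
    (h : (varDisj x l).eval v = true) : ∃ y ∈ x :: l, v y = true := by
  unfold varDisj at h
  rw [foldlOr_eval] at h
  simp [PropForm.eval] at h
  rcases h with h | ⟨y, hy, hv⟩
  · exact ⟨x, by simp, h⟩
  · exact ⟨y, by simp [hy], hv⟩

lemma subset_sat {V : Type} (Γ : Set (SForm V)) (hpos : ∀ φ ∈ Γ, SForm.IsPos φ)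
    (W W' : Set (V → Bool)) (hsub : W' ⊆ W) (h : ∀ φ ∈ Γ, FrameSat W φ) :
    ∀ φ ∈ Γ, FrameSat W' φ := by
  intro φ hφ
  cases φ with
  | pos A B => intro v hv hA; exact h _ hφ v (hsub hv) hA
  | neg A B => exact absurd (hpos _ hφ) (by simp [SForm.IsPos])

theorem stmt14 {V : Type} (Γ : Set (SForm V)) (hpos : ∀ φ ∈ Γ, SForm.IsPos φ)
    (a : V) (as : List V) (b : V) (bs : List V)
    (c : V) (cs : List V) (e : V) (es : List V)
    (h1 : SCons Γ (SForm.pos (varConj a as) (varDisj b bs)))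
    (h2 : ∀ Bi ∈ b :: bs, SCons (Γ ∪ {SForm.pos (varConj a as) (.var Bi)})
        (SForm.pos (varConj c cs) (varDisj e es))) :
    SCons Γ (SForm.pos (varConj c cs) (varDisj e es)) := by
  intro W hW hΓ v hv hC
  by_cases hA : (varConj a as).eval v = true
  · obtain ⟨Bi, hBi, hvBi⟩ := varDisj_exists v b bs (h1 W hW hΓ v hv hA)
    set W' : Set (V → Bool) := {w ∈ W | (varConj a as).eval w = false} ∪ {v} with hW'
    have hsub : W' ⊆ W := by
      intro w hw
      rcases hw with hw | hw
      · exact hw.1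
      · simp only [Set.mem_singleton_iff] at hw; subst hw; exact hv
    refine h2 Bi hBi W' ⟨v, Or.inr rfl⟩ ?_ v (Or.inr rfl) hC
    intro φ hφ
    rcases hφ with hφ | hφ
    · exact subset_sat Γ hpos W W' hsub hΓ φ hφ
    · simp only [Set.mem_singleton_iff] at hφ; subst hφ
      intro w hw hAw
      rcases hw with hw | hw
      · rw [hw.2] at hAw; exact absurd hAw (by simp)
      · simp only [Set.mem_singleton_iff] at hw; subst hw; exact hvBi
  · set W' : Set (V → Bool) := {w ∈ W | (varConj a as).eval w = false} with hW'
    have hsub : W' ⊆ W := fun w hw => hw.1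
    refine h2 b (by simp) W' ⟨v, hv, by simpa using hA⟩ ?_ v ⟨hv, by simpa using hA⟩ hC
    intro φ hφ
    rcases hφ with hφ | hφ
    · exact subset_sat Γ hpos W W' hsub hΓ φ hφ
    · simp only [Set.mem_singleton_iff] at hφ; subst hφ
      intro w hw hAw
      rw [hw.2] at hAw; exact absurd hAw (by simp)
end

section
/- The rule (disj2) fails without the positivity restriction: for distinct propositional variables A, B₁, B₂, C, D, the set Γ = {A ⇒ (B₁ ∨ B₂), A ⇏ B₁, A ⇏ B₂} is satisfiable; each set Γ ∪ {A ⇒ Bᵢ} (i = 1, 2) is unsatisfiable (so Γ ∪ {A ⇒ Bᵢ} ⊨ₛ C ⇒ D for both i); Γ ⊨ₛ A ⇒ (B₁ ∨ B₂); but Γ ⊭ₛ C ⇒ D. -/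
theorem stmt15 {V : Type} (A B1 B2 C D : V)
    (hdist : ([A, B1, B2, C, D] : List V).Pairwise (· ≠ ·)) :
    let Γ : Set (SForm V) :=
      {SForm.pos (.var A) ((PropForm.var B1).or (.var B2)),
       SForm.neg (.var A) (.var B1), SForm.neg (.var A) (.var B2)}
    SSat Γ ∧
    ¬ SSat (insert (SForm.pos (.var A) (.var B1)) Γ) ∧
    ¬ SSat (insert (SForm.pos (.var A) (.var B2)) Γ) ∧
    SCons (insert (SForm.pos (.var A) (.var B1)) Γ) (SForm.pos (.var C) (.var D)) ∧
    SCons (insert (SForm.pos (.var A) (.var B2)) Γ) (SForm.pos (.var C) (.var D)) ∧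
    SCons Γ (SForm.pos (.var A) ((PropForm.var B1).or (.var B2))) ∧
    ¬ SCons Γ (SForm.pos (.var C) (.var D)) := by
  intro Γ
  classical
  simp only [List.pairwise_cons, List.mem_cons, List.mem_singleton, List.not_mem_nil,
    List.Pairwise.nil] at hdist
  obtain ⟨hA, hB1, hB2, hrest⟩ := hdist
  have hAB1 : A ≠ B1 := hA B1 (by simp)
  have hAB2 : A ≠ B2 := hA B2 (by simp)
  have hAC : A ≠ C := hA C (by simp)
  have hB1B2 : B1 ≠ B2 := hB1 B2 (by simp)
  have hB1C : B1 ≠ C := hB1 C (by simp)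
  have hB2C : B2 ≠ C := hB2 C (by simp)
  have hAD : A ≠ D := hA D (by simp)
  have hB1D : B1 ≠ D := hB1 D (by simp)
  have hB2D : B2 ≠ D := hB2 D (by simp)
  set v1 : V → Bool := fun x => if x = A ∨ x = B1 ∨ x = C then true else false with hv1
  set v2 : V → Bool := fun x => if x = A ∨ x = B2 ∨ x = C then true else false with hv2
  have e1A : v1 A = true := by simp [hv1]
  have e1B1 : v1 B1 = true := by simp [hv1]
  have hCD : C ≠ D := hrest.1 D (by simp)
  have e1B2 : v1 B2 = false := by simp [hv1, Ne.symm hAB2, Ne.symm hB1B2, hB2C]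
  have e1C : v1 C = true := by simp [hv1]
  have e1D : v1 D = false := by simp [hv1, Ne.symm hAD, Ne.symm hB1D, Ne.symm hCD]
  have e2A : v2 A = true := by simp [hv2]
  have e2B1 : v2 B1 = false := by simp [hv2, Ne.symm hAB1, hB1B2, hB1C]
  have e2B2 : v2 B2 = true := by simp [hv2]
  have e2C : v2 C = true := by simp [hv2]
  have e2D : v2 D = false := by simp [hv2, Ne.symm hAD, Ne.symm hB2D, Ne.symm hCD]
  have hmem1 : SForm.pos (.var A) ((PropForm.var B1).or (.var B2)) ∈ Γ := by left; rfl
  have hmem2 : SForm.neg (.var A) (.var B1) ∈ Γ := by right; left; rfl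
  have hmem3 : SForm.neg (.var A) (.var B2) ∈ Γ := by right; right; rfl
  have hWsat : ∀ φ ∈ Γ, FrameSat {v1, v2} φ := by
    rintro φ (rfl | rfl | rfl)
    · rintro v (rfl | rfl) _ <;> simp [PropForm.eval, e1B1, e2B2]
    · exact ⟨v2, Or.inr rfl, by simp [PropForm.eval, e2A, e2B1]⟩
    · exact ⟨v1, Or.inl rfl, by simp [PropForm.eval, e1A, e1B2]⟩
  have unsat1 : ¬ SSat (insert (SForm.pos (.var A) (.var B1)) Γ) := by
    rintro ⟨W, hne, hW⟩
    obtain ⟨v, hvW, hvA, hvB1⟩ := hW _ (Set.mem_insert_of_mem _ hmem2)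
    have := hW _ (Set.mem_insert _ _) v hvW hvA
    simp [PropForm.eval] at this hvA hvB1
    rw [this] at hvB1; exact absurd hvB1 (by simp)
  have unsat2 : ¬ SSat (insert (SForm.pos (.var A) (.var B2)) Γ) := by
    rintro ⟨W, hne, hW⟩
    obtain ⟨v, hvW, hvA, hvB2⟩ := hW _ (Set.mem_insert_of_mem _ hmem3)
    have := hW _ (Set.mem_insert _ _) v hvW hvA
    simp [PropForm.eval] at this hvA hvB2
    rw [this] at hvB2; exact absurd hvB2 (by simp)
  refine ⟨⟨{v1, v2}, ⟨v1, Or.inl rfl⟩, hWsat⟩, unsat1, unsat2, ?_, ?_, ?_, ?_⟩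
  · intro W hne hW
    exact absurd ⟨W, hne, hW⟩ unsat1
  · intro W hne hW
    exact absurd ⟨W, hne, hW⟩ unsat2
  · intro W hne hW
    exact hW _ hmem1
  · intro hcons
    have := hcons {v1, v2} ⟨v1, Or.inl rfl⟩ hWsat v1 (Or.inl rfl)
      (by simp [PropForm.eval, e1C])
    simp [PropForm.eval, e1D] at this
end

section
/- Let Γ be a set of positive F₃ s-formulas closed under the F₃ derivability relation with Γ ⋫ C ⇒ E. Then there is a set Δ ⊇ Γ of positive F₃ s-formulas, closed under F₃ derivability, such that Δ ⋫ C ⇒ E and for every A ⇒ B ∈ Δ (with B = B₁ ∨ … ∨ Bₙ) there exists an index i with A ⇒ Bᵢ ∈ Δ. -/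
/-- Natural deduction for the fragment `F₃`: formulas have a nonempty conjunction of
variables on the left and a nonempty disjunction of variables on the right. -/
inductive Der3 {V : Type} : Set (SForm V) → SForm V → Prop
  | hyp {Γ : Set (SForm V)} {φ : SForm V} : φ ∈ Γ → Der3 Γ φ
  | ax {Γ : Set (SForm V)} (X : V) : Der3 Γ (SForm.pos (.var X) (.var X))
  | conj1 {Γ : Set (SForm V)} {a : V} {as bs : List V} {y : V} {ys : List V} :
      Der3 Γ (SForm.pos (varConj a as) (varDisj y ys)) →
      Der3 Γ (SForm.pos (varConj a (as ++ bs)) (varDisj y ys))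
  | conj2 {Γ : Set (SForm V)} {a b : V} {as bs : List V} {y : V} {ys : List V} :
      Der3 Γ (SForm.pos (varConj a as) (varDisj y ys)) →
      (∀ z, z ∈ a :: as ↔ z ∈ b :: bs) →
      Der3 Γ (SForm.pos (varConj b bs) (varDisj y ys))
  | trans {Γ : Set (SForm V)} {a : V} {as : List V} {x : V} {bs : List V}
      {z : V} {zs : List V} :
      Der3 Γ (SForm.pos (varConj a as) (.var x)) →
      Der3 Γ (SForm.pos (varConj x bs) (varDisj z zs)) →
      Der3 Γ (SForm.pos (varConj a (as ++ bs)) (varDisj z zs))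
  | bot {Γ : Set (SForm V)} {A B : PropForm V} {α : SForm V} :
      Der3 Γ (SForm.pos A B) → Der3 Γ (SForm.neg A B) → Der3 Γ α
  | neg {Γ : Set (SForm V)} {a c : V} {as cs : List V} {x y : V} {xs ys : List V} :
      Der3 Γ (SForm.neg (varConj c cs) (varDisj y ys)) →
      Der3 (insert (SForm.pos (varConj a as) (varDisj x xs)) Γ)
        (SForm.pos (varConj c cs) (varDisj y ys)) →
      Der3 Γ (SForm.neg (varConj a as) (varDisj x xs))
  | disj1 {Γ : Set (SForm V)} {A : PropForm V} {b d : V} {bs ds : List V} :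
      Der3 Γ (SForm.pos A (varDisj b bs)) →
      (∀ z ∈ b :: bs, z ∈ d :: ds) →
      Der3 Γ (SForm.pos A (varDisj d ds))
  | disj2 {Γ : Set (SForm V)} {a : V} {as : List V} {b : V} {bs : List V}
      {c : V} {cs : List V} {e : V} {es : List V} :
      (∀ φ ∈ Γ, SForm.IsPos φ) →
      Der3 Γ (SForm.pos (varConj a as) (varDisj b bs)) →
      (∀ Bi ∈ b :: bs, Der3 (insert (SForm.pos (varConj a as) (PropForm.var Bi)) Γ)
        (SForm.pos (varConj c cs) (varDisj e es))) →
      Der3 Γ (SForm.pos (varConj c cs) (varDisj e es))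

/-- Positive `F₃` s-formulas. -/
def IsPosF3 {V : Type} (φ : SForm V) : Prop :=
  ∃ a as b bs, φ = SForm.pos (varConj a as) (varDisj b bs)

/-- `F₃` s-formulas. -/
def IsF3 {V : Type} (φ : SForm V) : Prop :=
  ∃ a as b bs, φ = SForm.pos (varConj a as) (varDisj b bs) ∨
    φ = SForm.neg (varConj a as) (varDisj b bs)

/-!
Zorn's lemma, applied to the positive `F₃` extensions of `Γ` that do not derive `C ⇒ E`.
Chains have upper bounds because derivations use finitely many hypotheses; since (disj2) only
applies in positive contexts, the finiteness statement is about derivability in every positive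
extension (`PosDer3`). A maximal `Δ` is deductively closed by cut, and it is prime: if no
`A ⇒ Bᵢ` were in `Δ`, maximality would give `Δ, A ⇒ Bᵢ ⊳ C ⇒ E` for every `i`, and (disj2)
applied to `A ⇒ B ∈ Δ` would give `Δ ⊳ C ⇒ E`.
-/

section

open Set

variable {V : Type}

theorem IsPosF3.isPos {φ : SForm V} (h : IsPosF3 φ) : φ.IsPos := by
  obtain ⟨_, _, _, _, rfl⟩ := h
  trivial

theorem Der3.mono {Γ Γ' : Set (SForm V)} {φ : SForm V} (h : Der3 Γ φ) (hsub : Γ ⊆ Γ')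
    (hnew : ∀ ψ ∈ Γ' \ Γ, ψ.IsPos) : Der3 Γ' φ := by
  have sdiff_insert {s t : Set (SForm V)} (p : SForm V) : insert p s \ insert p t ⊆ s \ t :=
    fun ψ hψ => ⟨hψ.1.resolve_left fun h => hψ.2 (h ▸ mem_insert p t),
      fun h => hψ.2 (mem_insert_of_mem p h)⟩
  induction h generalizing Γ' with
  | hyp h => exact .hyp (hsub h)
  | ax X => exact .ax X
  | conj1 _ ih => exact .conj1 (ih hsub hnew)
  | conj2 _ hperm ih => exact .conj2 (ih hsub hnew) hperm
  | trans _ _ ih₁ ih₂ => exact .trans (ih₁ hsub hnew) (ih₂ hsub hnew)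
  | bot _ _ ih₁ ih₂ => exact .bot (ih₁ hsub hnew) (ih₂ hsub hnew)
  | disj1 _ hsub' ih => exact .disj1 (ih hsub hnew) hsub'
  | neg _ _ ih₁ ih₂ =>
    exact .neg (ih₁ hsub hnew)
      (ih₂ (insert_subset_insert hsub) fun ψ hψ => hnew ψ (sdiff_insert _ hψ))
  | @disj2 Γ _ _ _ _ _ _ _ _ hΓ _ _ ih ihprem =>
    refine .disj2 (fun ψ hψ => ?_) (ih hsub hnew) fun Bi hBi =>
      ihprem Bi hBi (insert_subset_insert hsub) fun ψ hψ => hnew ψ (sdiff_insert _ hψ)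
    by_cases hψΓ : ψ ∈ Γ
    exacts [hΓ ψ hψΓ, hnew ψ ⟨hψ, hψΓ⟩]

theorem Der3.insert_of_isPos {Γ : Set (SForm V)} {φ ψ : SForm V} (h : Der3 Γ φ)
    (hψ : ψ.IsPos) : Der3 (insert ψ Γ) φ :=
  h.mono (subset_insert ψ Γ) fun χ hχ => by
    obtain rfl := hχ.1.resolve_right hχ.2
    exact hψ

theorem Der3.cut {Γ : Set (SForm V)} {φ ψ : SForm V} (h : Der3 (insert φ Γ) ψ)
    (hφ : Der3 Γ φ) : Der3 Γ ψ := by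
  generalize hΓ₁ : insert φ Γ = Γ₁ at h
  induction h generalizing Γ with
  | hyp h =>
    subst hΓ₁
    rcases h with rfl | h
    exacts [hφ, .hyp h]
  | ax X => exact .ax X
  | conj1 _ ih => exact .conj1 (ih hφ hΓ₁)
  | conj2 _ hperm ih => exact .conj2 (ih hφ hΓ₁) hperm
  | trans _ _ ih₁ ih₂ => exact .trans (ih₁ hφ hΓ₁) (ih₂ hφ hΓ₁)
  | bot _ _ ih₁ ih₂ => exact .bot (ih₁ hφ hΓ₁) (ih₂ hφ hΓ₁)
  | disj1 _ hsub ih => exact .disj1 (ih hφ hΓ₁) hsub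
  | neg _ _ ih₁ ih₂ =>
    subst hΓ₁
    exact .neg (ih₁ hφ rfl) (ih₂ (hφ.insert_of_isPos trivial) (insert_comm _ _ _))
  | disj2 hΓ _ _ ih ihprem =>
    subst hΓ₁
    exact .disj2 (fun ψ hψ => hΓ ψ (mem_insert_of_mem _ hψ)) (ih hφ rfl) fun Bi hBi =>
      ihprem Bi hBi (hφ.insert_of_isPos trivial) (insert_comm _ _ _)

/-- `ψ` is derivable from every positive extension of `Γ₀`. Since (disj2) needs a positive
context, this, rather than `Der3 Γ₀ ψ`, is the notion preserved by the rules. -/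
def PosDer3 (Γ₀ : Set (SForm V)) (ψ : SForm V) : Prop :=
  ∀ S, Γ₀ ⊆ S → (∀ φ ∈ S, φ.IsPos) → Der3 S ψ

theorem PosDer3.mono {Γ₀ Γ₁ : Set (SForm V)} {ψ : SForm V} (h : PosDer3 Γ₀ ψ) (hsub : Γ₀ ⊆ Γ₁) :
    PosDer3 Γ₁ ψ :=
  fun S hS hpos => h S (hsub.trans hS) hpos

theorem PosDer3.map {Γ₀ : Set (SForm V)} {ψ χ : SForm V} (h : PosDer3 Γ₀ ψ)
    (rule : ∀ S, Der3 S ψ → Der3 S χ) : PosDer3 Γ₀ χ :=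
  fun S hS hpos => rule S (h S hS hpos)

theorem PosDer3.map₂ {Γ₁ Γ₂ : Set (SForm V)} {ψ₁ ψ₂ χ : SForm V} (h₁ : PosDer3 Γ₁ ψ₁)
    (h₂ : PosDer3 Γ₂ ψ₂) (rule : ∀ S, Der3 S ψ₁ → Der3 S ψ₂ → Der3 S χ) :
    PosDer3 (Γ₁ ∪ Γ₂) χ :=
  fun S hS hpos => rule S (h₁ S (subset_union_left.trans hS) hpos)
    (h₂ S (subset_union_right.trans hS) hpos)

theorem PosDer3.insert {Γ₀ S : Set (SForm V)} {p ψ : SForm V} (h : PosDer3 (insert p Γ₀) ψ)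
    (hp : p.IsPos) (hS : Γ₀ ⊆ S) (hpos : ∀ φ ∈ S, φ.IsPos) : Der3 (insert p S) ψ :=
  h _ (insert_subset_insert hS) (forall_mem_insert.2 ⟨hp, hpos⟩)

theorem exists_finite_subset_posDer3_insert {Γ : Set (SForm V)} {p ψ : SForm V}
    (h : ∃ Γ₀ ⊆ insert p Γ, Γ₀.Finite ∧ PosDer3 Γ₀ ψ) :
    ∃ Γ₀ ⊆ Γ, Γ₀.Finite ∧ PosDer3 (insert p Γ₀) ψ :=
  let ⟨Γ₀, hsub, hfin, hd⟩ := h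
  ⟨Γ₀ \ {p}, sdiff_singleton_subset_iff.2 hsub, hfin.sdiff,
    hd.mono (sdiff_singleton_subset_iff.1 subset_rfl)⟩

theorem List.exists_finite_subset_forall_mem {α ι : Type*} {Γ : Set α} {Q : ι → Set α → Prop}
    (hQ : ∀ i, Monotone (Q i)) :
    ∀ l : List ι, (∀ i ∈ l, ∃ s ⊆ Γ, s.Finite ∧ Q i s) → ∃ s ⊆ Γ, s.Finite ∧ ∀ i ∈ l, Q i s
  | [], _ => ⟨∅, empty_subset Γ, finite_empty, by simp⟩
  | i :: l, h => by
    obtain ⟨s, hsΓ, hs, hQs⟩ := h i mem_cons_self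
    obtain ⟨t, htΓ, ht, hQt⟩ :=
      exists_finite_subset_forall_mem hQ l fun j hj => h j (mem_cons_of_mem i hj)
    refine ⟨s ∪ t, union_subset hsΓ htΓ, hs.union ht, forall_mem_cons.2 ⟨?_, ?_⟩⟩
    · exact hQ i subset_union_left hQs
    · exact fun j hj => hQ j subset_union_right (hQt j hj)

theorem Der3.exists_finite_subset_posDer3 {Γ : Set (SForm V)} {ψ : SForm V} (h : Der3 Γ ψ) :
    ∃ Γ₀ ⊆ Γ, Γ₀.Finite ∧ PosDer3 Γ₀ ψ := by
  induction h with
  | @hyp Γ φ h => exact ⟨{φ}, singleton_subset_iff.2 h, finite_singleton φ,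
      fun S hS _ => .hyp (hS rfl)⟩
  | ax X => exact ⟨∅, empty_subset _, finite_empty, fun _ _ _ => .ax X⟩
  | conj1 _ ih =>
    obtain ⟨Γ₀, hsub, hfin, hd⟩ := ih
    exact ⟨Γ₀, hsub, hfin, hd.map fun _ => .conj1⟩
  | conj2 _ hperm ih =>
    obtain ⟨Γ₀, hsub, hfin, hd⟩ := ih
    exact ⟨Γ₀, hsub, hfin, hd.map fun _ h => .conj2 h hperm⟩
  | disj1 _ hsub' ih =>
    obtain ⟨Γ₀, hsub, hfin, hd⟩ := ih
    exact ⟨Γ₀, hsub, hfin, hd.map fun _ h => .disj1 h hsub'⟩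
  | trans _ _ ih₁ ih₂ =>
    obtain ⟨Γ₁, hsub₁, hfin₁, hd₁⟩ := ih₁
    obtain ⟨Γ₂, hsub₂, hfin₂, hd₂⟩ := ih₂
    exact ⟨Γ₁ ∪ Γ₂, union_subset hsub₁ hsub₂, hfin₁.union hfin₂, hd₁.map₂ hd₂ fun _ => .trans⟩
  | bot _ _ ih₁ ih₂ =>
    obtain ⟨Γ₁, hsub₁, hfin₁, hd₁⟩ := ih₁
    obtain ⟨Γ₂, hsub₂, hfin₂, hd₂⟩ := ih₂
    exact ⟨Γ₁ ∪ Γ₂, union_subset hsub₁ hsub₂, hfin₁.union hfin₂, hd₁.map₂ hd₂ fun _ => .bot⟩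
  | neg _ _ ih₁ ih₂ =>
    obtain ⟨Γ₁, hsub₁, hfin₁, hd₁⟩ := ih₁
    obtain ⟨Γ₂, hsub₂, hfin₂, hd₂⟩ := exists_finite_subset_posDer3_insert ih₂
    refine ⟨Γ₁ ∪ Γ₂, union_subset hsub₁ hsub₂, hfin₁.union hfin₂, fun S hS hpos => ?_⟩
    exact .neg (hd₁ S (subset_union_left.trans hS) hpos)
      (hd₂.insert trivial (subset_union_right.trans hS) hpos)
  | @disj2 Γ a as b bs _ _ _ _ _ _ _ ih ihprem =>
    obtain ⟨Γ₁, hsub₁, hfin₁, hd₁⟩ := ih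
    obtain ⟨Γ₂, hsub₂, hfin₂, hd₂⟩ := List.exists_finite_subset_forall_mem
      (Q := fun Bi s => PosDer3 (insert (.pos (varConj a as) (.var Bi)) s) _)
      (fun _ _ _ hst h => h.mono (insert_subset_insert hst)) (b :: bs)
      fun Bi hBi => exists_finite_subset_posDer3_insert (ihprem Bi hBi)
    refine ⟨Γ₁ ∪ Γ₂, union_subset hsub₁ hsub₂, hfin₁.union hfin₂, fun S hS hpos => ?_⟩
    exact .disj2 hpos (hd₁ S (subset_union_left.trans hS) hpos) fun Bi hBi =>
      (hd₂ Bi hBi).insert trivial (subset_union_right.trans hS) hpos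

theorem not_der3_sUnion_of_isChain {C : Set (Set (SForm V))} {ψ : SForm V}
    (hC : IsChain (· ⊆ ·) C) (hne : C.Nonempty) (hpos : ∀ s ∈ C, ∀ φ ∈ s, φ.IsPos)
    (hnd : ∀ s ∈ C, ¬ Der3 s ψ) : ¬ Der3 (⋃₀ C) ψ := fun h => by
  obtain ⟨Γ₀, hsub, hfin, hd⟩ := h.exists_finite_subset_posDer3
  obtain ⟨s, hs, hΓ₀s⟩ := hC.directedOn.exists_mem_subset_of_finite_of_subset_sUnion hne hfin hsub
  exact hnd s hs (hd s hΓ₀s (hpos s hs))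

def extensionsAvoiding (Γ : Set (SForm V)) (χ : SForm V) : Set (Set (SForm V)) :=
  {Δ | Γ ⊆ Δ ∧ (∀ φ ∈ Δ, IsPosF3 φ) ∧ ¬ Der3 Δ χ}

namespace extensionsAvoiding

variable {Γ Δ : Set (SForm V)} {χ : SForm V}

theorem chain_bound (C : Set (Set (SForm V))) (hCsub : C ⊆ extensionsAvoiding Γ χ)
    (hC : IsChain (· ⊆ ·) C) (hne : C.Nonempty) :
    ∃ ub ∈ extensionsAvoiding Γ χ, ∀ s ∈ C, s ⊆ ub := by
  refine ⟨⋃₀ C, ⟨?_, ?_, ?_⟩, fun s hs => subset_sUnion_of_mem hs⟩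
  · obtain ⟨s, hs⟩ := hne
    exact (hCsub hs).1.trans (subset_sUnion_of_mem hs)
  · rintro φ ⟨s, hs, hφ⟩
    exact (hCsub hs).2.1 φ hφ
  · exact not_der3_sUnion_of_isChain hC hne (fun s hs φ hφ => ((hCsub hs).2.1 φ hφ).isPos)
      fun s hs => (hCsub hs).2.2

theorem mem_of_maximal_of_not_der3_insert (hΔ : Maximal (· ∈ extensionsAvoiding Γ χ) Δ)
    {φ : SForm V} (hφ : IsPosF3 φ) (h : ¬ Der3 (insert φ Δ) χ) : φ ∈ Δ :=
  have hins : insert φ Δ ∈ extensionsAvoiding Γ χ :=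
    ⟨hΔ.prop.1.trans (subset_insert φ Δ), forall_mem_insert.2 ⟨hφ, hΔ.prop.2.1⟩, h⟩
  hΔ.2 hins (subset_insert φ Δ) (mem_insert φ Δ)

theorem mem_of_maximal_of_der3 (hΔ : Maximal (· ∈ extensionsAvoiding Γ χ) Δ)
    {φ : SForm V} (hφ : IsPosF3 φ) (h : Der3 Δ φ) : φ ∈ Δ :=
  mem_of_maximal_of_not_der3_insert hΔ hφ fun hχ => hΔ.prop.2.2 (hχ.cut h)

theorem exists_mem_of_maximal_of_mem {c e : V} {cs es : List V}
    (hΔ : Maximal (· ∈ extensionsAvoiding Γ (.pos (varConj c cs) (varDisj e es))) Δ)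
    {a b : V} {as bs : List V} (h : .pos (varConj a as) (varDisj b bs) ∈ Δ) :
    ∃ bi ∈ b :: bs, .pos (varConj a as) (.var bi) ∈ Δ := by
  by_contra! hnone
  have hcases : ∀ bi ∈ b :: bs, Der3 (insert (.pos (varConj a as) (.var bi)) Δ)
      (.pos (varConj c cs) (varDisj e es)) := fun bi hbi => by
    by_contra hnd
    exact hnone bi hbi (mem_of_maximal_of_not_der3_insert hΔ ⟨a, as, bi, [], rfl⟩ hnd)
  exact hΔ.prop.2.2 (.disj2 (fun φ hφ => (hΔ.prop.2.1 φ hφ).isPos) (.hyp h) hcases)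

end extensionsAvoiding

end

theorem stmt16_general {V : Type} (Γ : Set (SForm V))
    (hpos : ∀ φ ∈ Γ, IsPosF3 φ)
    (c : V) (cs : List V) (e : V) (es : List V)
    (hnd : ¬ Der3 Γ (SForm.pos (varConj c cs) (varDisj e es))) :
    ∃ Δ : Set (SForm V), Γ ⊆ Δ ∧ (∀ φ ∈ Δ, IsPosF3 φ) ∧
      (∀ φ, IsPosF3 φ → Der3 Δ φ → φ ∈ Δ) ∧
      ¬ Der3 Δ (SForm.pos (varConj c cs) (varDisj e es)) ∧
      (∀ a as b bs, SForm.pos (varConj a as) (varDisj b bs) ∈ Δ →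
        ∃ bi ∈ b :: bs, SForm.pos (varConj a as) (PropForm.var bi) ∈ Δ) := by
  obtain ⟨Δ, hΓΔ, hΔ⟩ := zorn_subset_nonempty _ extensionsAvoiding.chain_bound Γ
    ⟨subset_rfl, hpos, hnd⟩
  exact ⟨Δ, hΓΔ, hΔ.prop.2.1, fun φ hφ => extensionsAvoiding.mem_of_maximal_of_der3 hΔ hφ,
    hΔ.prop.2.2, fun a as b bs => extensionsAvoiding.exists_mem_of_maximal_of_mem hΔ⟩

theorem stmt16 {V : Type} (Γ : Set (SForm V))
    (hpos : ∀ φ ∈ Γ, IsPosF3 φ)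
    (hclosed : ∀ φ, IsPosF3 φ → Der3 Γ φ → φ ∈ Γ)
    (c : V) (cs : List V) (e : V) (es : List V)
    (hnd : ¬ Der3 Γ (SForm.pos (varConj c cs) (varDisj e es))) :
    ∃ Δ : Set (SForm V), Γ ⊆ Δ ∧ (∀ φ ∈ Δ, IsPosF3 φ) ∧
      (∀ φ, IsPosF3 φ → Der3 Δ φ → φ ∈ Δ) ∧
      ¬ Der3 Δ (SForm.pos (varConj c cs) (varDisj e es)) ∧
      (∀ a as b bs, SForm.pos (varConj a as) (varDisj b bs) ∈ Δ →
        ∃ bi ∈ b :: bs, SForm.pos (varConj a as) (PropForm.var bi) ∈ Δ) :=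
  stmt16_general Γ hpos c cs e es hnd
end

section
/- Soundness and completeness of the F₂ natural deduction system: for a set Γ of F₂ s-formulas and an F₂ s-formula α, Γ ⊨ₛ α if and only if α is derivable from Γ in the F₂ natural deduction system. -/
/-- Natural deduction for the fragment `F₂`: formulas have a nonempty conjunction of
variables on the left and a single variable on the right. -/
inductive Der2 {V : Type} : Set (SForm V) → SForm V → Prop
  | hyp {Γ : Set (SForm V)} {φ : SForm V} : φ ∈ Γ → Der2 Γ φ
  | ax {Γ : Set (SForm V)} (X : V) : Der2 Γ (SForm.pos (.var X) (.var X))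
  | conj1 {Γ : Set (SForm V)} {a : V} {as bs : List V} {y : V} :
      Der2 Γ (SForm.pos (varConj a as) (.var y)) →
      Der2 Γ (SForm.pos (varConj a (as ++ bs)) (.var y))
  | conj2 {Γ : Set (SForm V)} {a b : V} {as bs : List V} {y : V} :
      Der2 Γ (SForm.pos (varConj a as) (.var y)) →
      (∀ z, z ∈ a :: as ↔ z ∈ b :: bs) →
      Der2 Γ (SForm.pos (varConj b bs) (.var y))
  | trans {Γ : Set (SForm V)} {a : V} {as : List V} {x : V} {bs : List V} {z : V} :
      Der2 Γ (SForm.pos (varConj a as) (.var x)) →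
      Der2 Γ (SForm.pos (varConj x bs) (.var z)) →
      Der2 Γ (SForm.pos (varConj a (as ++ bs)) (.var z))
  | bot {Γ : Set (SForm V)} {A B : PropForm V} {α : SForm V} :
      Der2 Γ (SForm.pos A B) → Der2 Γ (SForm.neg A B) → Der2 Γ α
  | neg {Γ : Set (SForm V)} {a c : V} {as cs : List V} {x y : V} :
      Der2 Γ (SForm.neg (varConj c cs) (.var y)) →
      Der2 (insert (SForm.pos (varConj a as) (.var x)) Γ)
        (SForm.pos (varConj c cs) (.var y)) →
      Der2 Γ (SForm.neg (varConj a as) (.var x))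

/-- `F₂` s-formulas. -/
def IsF2 {V : Type} (φ : SForm V) : Prop :=
  ∃ a as y, φ = SForm.pos (varConj a as) (PropForm.var y) ∨
    φ = SForm.neg (varConj a as) (PropForm.var y)

namespace Stmt18Aux

variable {V : Type}

lemma eval_foldl (v : V → Bool) (l : List V) (A : PropForm V) :
    (l.foldl (fun acc y => acc.and (.var y)) A).eval v = (A.eval v && l.all v) := by
  induction l generalizing A with
  | nil => simp
  | cons b l ih => simp [ih, PropForm.eval, Bool.and_assoc]

lemma evalConj (v : V → Bool) (a : V) (as : List V) :
    (varConj a as).eval v = true ↔ ∀ z ∈ a :: as, v z = true := by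
  simp [varConj, eval_foldl, PropForm.eval, List.all_eq_true]

lemma memDer {Γ : Set (SForm V)} {a : V} {as : List V} {w : V}
    (hw : w ∈ a :: as) : Der2 Γ (SForm.pos (varConj a as) (.var w)) := by
  have h0 : Der2 Γ (SForm.pos (varConj w ([] ++ (a :: as))) (.var w)) :=
    Der2.conj1 (Der2.ax w)
  refine Der2.conj2 h0 ?_
  intro z
  simp only [List.nil_append, List.mem_cons] at *
  constructor
  · rintro (rfl | h)
    · rcases hw with rfl | h <;> simp_all
    · exact h
  · intro h; right; exact h

lemma removeList {Γ : Set (SForm V)} {a : V} {as : List V} {y : V} :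
    ∀ bs : List V, Der2 Γ (SForm.pos (varConj a (as ++ bs)) (.var y)) →
      (∀ w ∈ bs, Der2 Γ (SForm.pos (varConj a as) (.var w))) →
      Der2 Γ (SForm.pos (varConj a as) (.var y))
  | [] , h, _ => by simpa using h
  | b :: bs, h, hw => by
    have h1 : Der2 Γ (SForm.pos (varConj b (a :: as ++ bs)) (.var y)) := by
      refine Der2.conj2 h ?_
      intro z; simp only [List.mem_cons, List.mem_append]; tauto
    have h2 : Der2 Γ (SForm.pos (varConj a (as ++ (a :: as ++ bs))) (.var y)) :=
      Der2.trans (hw b (by simp)) h1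
    have h3 : Der2 Γ (SForm.pos (varConj a (as ++ bs)) (.var y)) := by
      refine Der2.conj2 h2 ?_
      intro z; simp only [List.mem_cons, List.mem_append]; tauto
    exact removeList bs h3 (fun w hmem => hw w (by simp [hmem]))

lemma cutList {Γ : Set (SForm V)} {a x : V} {as bs : List V} {z : V}
    (h1 : Der2 Γ (SForm.pos (varConj x bs) (.var z)))
    (h2 : ∀ w ∈ x :: bs, Der2 Γ (SForm.pos (varConj a as) (.var w))) :
    Der2 Γ (SForm.pos (varConj a as) (.var z)) :=
  removeList bs (Der2.trans (h2 x (by simp)) h1)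
    (fun w hw => h2 w (by simp [hw]))

/-- Horn completeness: if the propositional implications of `Γ` together with the
conjunction `varConj a as` entail `y`, then the positive s-formula is derivable. -/
lemma horn {Γ : Set (SForm V)} (hΓ : ∀ φ ∈ Γ, IsF2 φ) {a : V} {as : List V} {y : V}
    (h : ∀ v : V → Bool, (∀ C ∈ propPart Γ, C.eval v = true) →
        (varConj a as).eval v = true → v y = true) :
    Der2 Γ (SForm.pos (varConj a as) (.var y)) := by
  classical
  set v : V → Bool := fun z => decide (Der2 Γ (SForm.pos (varConj a as) (.var z))) with hvdef
  have hv : ∀ z, v z = true ↔ Der2 Γ (SForm.pos (varConj a as) (.var z)) := by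
    intro z; simp [hvdef]
  have hsat : ∀ C ∈ propPart Γ, C.eval v = true := by
    rintro C ⟨A, B, hAB, rfl⟩
    obtain ⟨c, cs, y', hcase⟩ := hΓ _ hAB
    rcases hcase with hcase | hcase
    · obtain ⟨rfl, rfl⟩ : A = varConj c cs ∧ B = PropForm.var y' := by
        cases hcase; exact ⟨rfl, rfl⟩
      show (!(varConj c cs).eval v || v y') = true
      by_cases hA : (varConj c cs).eval v = true
      · have hall : ∀ w ∈ c :: cs, Der2 Γ (SForm.pos (varConj a as) (.var w)) := by
          intro w hw
          exact (hv w).mp ((evalConj v c cs).mp hA w hw)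
        have := cutList (Der2.hyp hAB) hall
        simp [hA, (hv y').mpr this]
      · simp [Bool.eq_false_iff.mpr hA]
    · cases hcase
  have hA : (varConj a as).eval v = true := by
    rw [evalConj]
    intro z hz
    exact (hv z).mpr (memDer hz)
  exact (hv y).mp (h v hsat hA)

lemma allTrue_mem {Γ : Set (SForm V)} (hΓ : ∀ φ ∈ Γ, IsF2 φ) :
    ∀ C ∈ propPart Γ, C.eval (fun _ => true) = true := by
  rintro C ⟨A, B, hAB, rfl⟩
  obtain ⟨c, cs, y', hcase⟩ := hΓ _ hAB
  rcases hcase with hcase | hcase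
  · obtain ⟨rfl, rfl⟩ : A = varConj c cs ∧ B = PropForm.var y' := by
      cases hcase; exact ⟨rfl, rfl⟩
    simp [PropForm.eval]
  · cases hcase

lemma sound {Γ : Set (SForm V)} {α : SForm V} (h : Der2 Γ α) : SCons Γ α := by
  induction h with
  | hyp h => intro W hW hsat; exact hsat _ h
  | ax X => intro W hW hsat v hv hA; exact hA
  | @conj1 Γ a as bs y _ ih =>
    intro W hW hsat v hv hA
    refine ih W hW hsat v hv ?_
    rw [evalConj] at hA ⊢
    intro z hz
    refine hA z ?_
    simp only [List.mem_cons, List.mem_append] at hz ⊢; tauto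
  | @conj2 Γ a b as bs y _ hperm ih =>
    intro W hW hsat v hv hA
    refine ih W hW hsat v hv ?_
    rw [evalConj] at hA ⊢
    intro z hz
    exact hA z ((hperm z).mp hz)
  | @trans Γ a as x bs z _ _ ih1 ih2 =>
    intro W hW hsat v hv hA
    rw [evalConj] at hA
    have hx : v x = true := by
      refine ih1 W hW hsat v hv ?_
      rw [evalConj]
      intro w hw
      refine hA w ?_
      simp only [List.mem_cons, List.mem_append] at hw ⊢; tauto
    refine ih2 W hW hsat v hv ?_
    rw [evalConj]
    intro w hw
    simp only [List.mem_cons] at hw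
    rcases hw with rfl | hw
    · exact hx
    · refine hA w ?_
      simp only [List.mem_cons, List.mem_append]; tauto
  | @bot Γ A B α _ _ ih1 ih2 =>
    intro W hW hsat
    obtain ⟨v, hv, hA, hB⟩ := ih2 W hW hsat
    have := ih1 W hW hsat v hv hA
    rw [this] at hB; cases hB
  | @neg Γ a c as cs x y _ _ ih1 ih2 =>
    intro W hW hsat
    by_contra hno
    have hpos : FrameSat W (SForm.pos (varConj a as) (.var x)) := by
      intro v hv hA
      by_contra hx
      exact hno ⟨v, hv, hA, Bool.eq_false_iff.mpr hx⟩
    have hsat' : ∀ φ ∈ insert (SForm.pos (varConj a as) (PropForm.var x)) Γ,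
        FrameSat W φ := by
      rintro φ (rfl | hφ)
      · exact hpos
      · exact hsat _ hφ
    obtain ⟨v, hv, hC, hy⟩ := ih1 W hW hsat
    have := ih2 W hW hsat' v hv hC
    rw [this] at hy; cases hy

lemma propPart_insert (Γ : Set (SForm V)) (A B : PropForm V) :
    propPart (insert (SForm.pos A B) Γ) = insert (PropForm.imp A B) (propPart Γ) := by
  ext C
  constructor
  · rintro ⟨A', B', hmem, rfl⟩
    rcases hmem with hmem | hmem
    · cases hmem; left; rfl
    · right; exact ⟨A', B', hmem, rfl⟩
  · rintro (rfl | ⟨A', B', hmem, rfl⟩)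
    · exact ⟨A, B, Set.mem_insert _ _, rfl⟩
    · exact ⟨A', B', Set.mem_insert_of_mem _ hmem, rfl⟩

end Stmt18Aux

open Stmt18Aux in
theorem stmt18 {V : Type} (Γ : Set (SForm V)) (hΓ : ∀ φ ∈ Γ, IsF2 φ)
    (α : SForm V) (hα : IsF2 α) :
    SCons Γ α ↔ Der2 Γ α := by
  classical
  constructor
  · intro hcons
    obtain ⟨a, as, y, hcase⟩ := hα
    rcases hcase with rfl | rfl
    · -- positive case
      by_cases hbad : ∃ c cs y', SForm.neg (varConj c cs) (PropForm.var y') ∈ Γ ∧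
          ∀ v : V → Bool, (∀ C ∈ propPart Γ, C.eval v = true) →
            (varConj c cs).eval v = true → v y' = true
      · obtain ⟨c, cs, y', hmem, hconseq⟩ := hbad
        exact Der2.bot (horn hΓ hconseq) (Der2.hyp hmem)
      · push_neg at hbad
        set W : Set (V → Bool) := {v | ∀ C ∈ propPart Γ, C.eval v = true} with hWdef
        have hWne : W.Nonempty := ⟨fun _ => true, allTrue_mem hΓ⟩
        have hWsat : ∀ φ ∈ Γ, FrameSat W φ := by
          intro φ hφ
          obtain ⟨c, cs, y', hcase⟩ := hΓ _ hφ
          rcases hcase with rfl | rfl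
          · intro v hv hA
            have himp : (PropForm.imp (varConj c cs) (PropForm.var y')).eval v = true :=
              hv _ ⟨_, _, hφ, rfl⟩
            simpa [PropForm.eval, hA] using himp
          · obtain ⟨v, hv, hA, hy⟩ := hbad c cs y' hφ
            exact ⟨v, hv, hA, Bool.eq_false_iff.mpr hy⟩
        have hfs := hcons W hWne hWsat
        exact horn hΓ (fun v hv hA => hfs v hv hA)
    · -- negative case
      set Γ' : Set (SForm V) :=
        insert (SForm.pos (varConj a as) (PropForm.var y)) Γ with hΓ'def
      have hΓ' : ∀ φ ∈ Γ', IsF2 φ := by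
        rintro φ (rfl | hφ)
        · exact ⟨a, as, y, Or.inl rfl⟩
        · exact hΓ _ hφ
      by_cases hclaim : ∃ c cs y', SForm.neg (varConj c cs) (PropForm.var y') ∈ Γ ∧
          ∀ v : V → Bool, (∀ C ∈ propPart Γ', C.eval v = true) →
            (varConj c cs).eval v = true → v y' = true
      · obtain ⟨c, cs, y', hmem, hconseq⟩ := hclaim
        exact Der2.neg (Der2.hyp hmem) (horn hΓ' hconseq)
      · exfalso
        push_neg at hclaim
        set W : Set (V → Bool) := {v | ∀ C ∈ propPart Γ', C.eval v = true} with hWdef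
        have hWne : W.Nonempty := ⟨fun _ => true, allTrue_mem hΓ'⟩
        have hsub : ∀ v ∈ W, ∀ C ∈ propPart Γ, C.eval v = true := by
          intro v hv C hC
          refine hv C ?_
          obtain ⟨A', B', hmem, rfl⟩ := hC
          exact ⟨A', B', Set.mem_insert_of_mem _ hmem, rfl⟩
        have hWsat : ∀ φ ∈ Γ, FrameSat W φ := by
          intro φ hφ
          obtain ⟨c, cs, y', hcase⟩ := hΓ _ hφ
          rcases hcase with rfl | rfl
          · intro v hv hA
            have himp : (PropForm.imp (varConj c cs) (PropForm.var y')).eval v = true :=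
              hsub v hv _ ⟨_, _, hφ, rfl⟩
            simpa [PropForm.eval, hA] using himp
          · obtain ⟨v, hv, hA, hy⟩ := hclaim c cs y' hφ
            exact ⟨v, hv, hA, Bool.eq_false_iff.mpr hy⟩
        obtain ⟨v, hv, hA, hy⟩ := hcons W hWne hWsat
        have himp : (PropForm.imp (varConj a as) (PropForm.var y)).eval v = true := by
          refine hv _ ?_
          exact ⟨_, _, Set.mem_insert _ _, rfl⟩
        simp only [PropForm.eval] at hy
        simp [PropForm.eval, hA, hy] at himp
  · exact sound
end
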